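/- For every integer n ≥ 1, the coefficient c(V₁⁽⁸⁾;n) is odd if and only if 4n − 1 = p^{4a+1}·m² for some prime p, integer a ≥ 0, and positive integer m with p ∤ m. -/

import Mathlib

open PowerSeries Finset
open scoped Classical

noncomputable section

/-- The generalized q-Pochhammer symbol `(a;b)_n = ∏_{j=0}^{n-1} (1 - a·bʲ)`
in the ring `ℤ⟦q⟧` of formal power series (here the variable `q` is `PowerSeries.X`). -/
def qPoch (a b : PowerSeries ℤ) (n : ℕ) : PowerSeries ℤ :=
  ∏ j ∈ Finset.range n, (1 - a * b ^ j)

/-- Division of formal power series; this is genuine division whenever the denominator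
has constant coefficient `1`. -/
def psDiv (f g : PowerSeries ℤ) : PowerSeries ℤ :=
  f * PowerSeries.invOfUnit g 1

/-- The coefficientwise sum of a family of formal power series. -/
def psSum (f : ℕ → PowerSeries ℤ) : PowerSeries ℤ :=
  PowerSeries.mk fun n => ∑' k, PowerSeries.coeff n (f k)

/-- The eighth order mock theta function
`V₁⁽⁸⁾(q) = ∑_{n≥0} q^{(n+1)²}·(−q;q²)_n / (q;q²)_{n+1}`. -/
def mockV18 : PowerSeries ℤ :=
  psSum fun n => psDiv (X ^ ((n + 1) ^ 2) * qPoch (-X) (X ^ 2) n) (qPoch X (X ^ 2) (n + 1))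

/-!
Modulo 2 the signs in `(-q;q²)_k` disappear, so the `k`-th summand of `V₁⁽⁸⁾` becomes
`q^{(k+1)²}/(1 - q^{2k+1})`, and `c(V₁⁽⁸⁾;n)` has the parity of the number of `k` with
`(k+1)² ≤ n` and `2k+1 ∣ n - (k+1)²`. Since `4n - 4(k+1)² = (4n-1) - (2k+1)(2k+3)`, the map
`k ↦ 2k+1` identifies these `k` with the divisors `d` of `M = 4n-1` with `d² < M`. As
`M ≡ 3 mod 4` is not a square, these are exactly half of the divisors of `M`, so the coefficient
is odd iff `τ(M) = ∏ₚ (vₚ(M) + 1) ≡ 2 mod 4`, i.e. iff one exponent is `≡ 1 mod 4` and all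
others are even.
-/

namespace PowerSeries

variable {R : Type*} [CommRing R]

theorem coeff_eq_of_mul_one_sub_X_pow_eq {f : R⟦X⟧} {m e : ℕ} (hm : m ≠ 0)
    (h : f * (1 - X ^ m) = X ^ e) (n : ℕ) :
    coeff n f = if e ≤ n ∧ m ∣ n - e then 1 else 0 := by
  have hgeom : (1 - X ^ m) * expand m hm (mk 1 : R⟦X⟧) = 1 := by
    simpa [mul_comm] using congrArg (expand m hm) (mk_one_mul_one_sub_eq_one (S := R))
  have hf : f = X ^ e * expand m hm (mk 1) := by
    rw [← h, mul_assoc, hgeom, mul_one]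
  rw [hf, coeff_X_pow_mul', coeff_expand]
  by_cases he : e ≤ n <;> by_cases hd : m ∣ n - e <;> simp [he, hd]

end PowerSeries

theorem constantCoeff_qPoch {a : ℤ⟦X⟧} (ha : constantCoeff a = 0) (b : ℤ⟦X⟧) (n : ℕ) :
    constantCoeff (qPoch a b n) = 1 := by
  simp [qPoch, map_prod, ha]

theorem qPoch_succ (a b : ℤ⟦X⟧) (n : ℕ) :
    qPoch a b (n + 1) = qPoch a b n * (1 - a * b ^ n) :=
  prod_range_succ _ n

theorem psDiv_mul_cancel (f : ℤ⟦X⟧) {g : ℤ⟦X⟧} (hg : constantCoeff g = 1) :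
    psDiv f g * g = f := by
  rw [psDiv, mul_assoc, invOfUnit_mul g 1 (by simpa using hg), mul_one]

theorem map_qPoch_neg_zmod_two (a b : ℤ⟦X⟧) (n : ℕ) :
    map (Int.castRingHom (ZMod 2)) (qPoch (-a) b n) =
      map (Int.castRingHom (ZMod 2)) (qPoch a b n) := by
  have hneg (f : (ZMod 2)⟦X⟧) : -f = f := by ext; simp [CharTwo.neg_eq]
  simp only [qPoch, map_prod, map_sub, map_mul, map_neg, hneg]

def mockV18Term (k : ℕ) : ℤ⟦X⟧ :=
  psDiv (X ^ ((k + 1) ^ 2) * qPoch (-X) (X ^ 2) k) (qPoch X (X ^ 2) (k + 1))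

theorem map_mockV18Term_mul_one_sub_X_pow (k : ℕ) :
    map (Int.castRingHom (ZMod 2)) (mockV18Term k) * (1 - X ^ (2 * k + 1)) =
      X ^ ((k + 1) ^ 2) := by
  have hQ : map (Int.castRingHom (ZMod 2)) (qPoch X (X ^ 2) k) ≠ 0 := fun h0 => by
    simpa [coeff_map, constantCoeff_qPoch] using congrArg (coeff 0) h0
  have hdiv : mockV18Term k * (qPoch X (X ^ 2) k * (1 - X ^ (2 * k + 1))) =
      X ^ ((k + 1) ^ 2) * qPoch (-X) (X ^ 2) k := by
    rw [show (X : ℤ⟦X⟧) ^ (2 * k + 1) = X * (X ^ 2) ^ k by ring, ← qPoch_succ]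
    exact psDiv_mul_cancel _ (constantCoeff_qPoch (by simp) _ _)
  apply mul_left_cancel₀ hQ
  have := congrArg (map (Int.castRingHom (ZMod 2))) hdiv
  simp only [map_mul, map_sub, map_one, map_pow, map_X, map_qPoch_neg_zmod_two] at this
  linear_combination this

theorem coeff_mockV18Term_of_lt {k n : ℕ} (h : n < (k + 1) ^ 2) :
    coeff n (mockV18Term k) = 0 := by
  rw [mockV18Term, psDiv, mul_assoc, coeff_X_pow_mul', if_neg (by omega)]

theorem coeff_mockV18 (n : ℕ) : coeff n mockV18 = ∑ k ∈ range n, coeff n (mockV18Term k) := by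
  rw [mockV18, psSum, coeff_mk]
  refine tsum_eq_sum fun k hk => coeff_mockV18Term_of_lt ?_
  rw [mem_range, not_lt] at hk
  nlinarith

theorem intCast_coeff_mockV18Term (k n : ℕ) :
    ((coeff n (mockV18Term k) : ℤ) : ZMod 2) =
      if (k + 1) ^ 2 ≤ n ∧ 2 * k + 1 ∣ n - (k + 1) ^ 2 then 1 else 0 := by
  rw [← eq_intCast (Int.castRingHom (ZMod 2)), ← coeff_map]
  exact coeff_eq_of_mul_one_sub_X_pow_eq (by omega) (map_mockV18Term_mul_one_sub_X_pow k) n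

theorem odd_coeff_mockV18_iff (n : ℕ) :
    Odd (coeff n mockV18) ↔
      Odd #{k ∈ range n | (k + 1) ^ 2 ≤ n ∧ 2 * k + 1 ∣ n - (k + 1) ^ 2} := by
  rw [← ZMod.intCast_eq_one_iff_odd, ← ZMod.natCast_eq_one_iff_odd, coeff_mockV18, Int.cast_sum]
  simp only [intCast_coeff_mockV18Term]
  rw [sum_boole]

namespace Nat

theorem not_isSquare_of_mod_four_eq_three {M : ℕ} (h : M % 4 = 3) : ¬IsSquare M := by
  rintro ⟨r, rfl⟩
  have hmod := mul_mod r r 4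
  have : r % 4 < 4 := mod_lt r (by norm_num)
  interval_cases r % 4 <;> omega

theorem mul_self_lt_iff_lt_div_mul_div {M d : ℕ} (hM : M ≠ 0) (hd : d ∣ M) :
    d * d < M ↔ M < M / d * (M / d) := by
  obtain ⟨e, rfl⟩ := hd
  have hd0 : 0 < d := pos_of_ne_zero (left_ne_zero_of_mul hM)
  have he0 : 0 < e := pos_of_ne_zero (right_ne_zero_of_mul hM)
  rw [Nat.mul_div_cancel_left e hd0, Nat.mul_lt_mul_left hd0, Nat.mul_lt_mul_right he0]

theorem mul_self_lt_iff_mul_add_two_le {M d : ℕ} (hM : Odd M) (hd : d ∣ M) :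
    d * d < M ↔ d * (d + 2) ≤ M := by
  obtain ⟨e, rfl⟩ := hd
  obtain ⟨⟨i, rfl⟩, ⟨j, rfl⟩⟩ := odd_mul.mp hM
  rw [Nat.mul_lt_mul_left (by omega), Nat.mul_le_mul_left_iff (by omega)]
  omega

theorem card_divisors_eq_two_mul_card_filter_mul_self_lt {M : ℕ} (hM : ¬IsSquare M) :
    #M.divisors = 2 * #{d ∈ M.divisors | d * d < M} := by
  have hM0 : M ≠ 0 := by rintro rfl; exact hM ⟨0, rfl⟩
  have hlt_of_not_lt {d : ℕ} (hd : ¬d * d < M) : M < d * d :=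
    lt_of_le_of_ne (not_lt.mp hd) fun h => hM ⟨d, h⟩
  rw [← card_filter_add_card_filter_not (fun d => d * d < M), two_mul]
  congr 1
  symm
  apply card_nbij' (M / ·) (M / ·)
  · intro d hd
    simp only [mem_coe, mem_filter, mem_divisors] at hd ⊢
    obtain ⟨⟨hdM, -⟩, hlt⟩ := hd
    refine ⟨⟨div_dvd_of_dvd hdM, hM0⟩, not_lt.mpr ?_⟩
    exact ((mul_self_lt_iff_lt_div_mul_div hM0 hdM).1 hlt).le
  · intro d hd
    simp only [mem_coe, mem_filter, mem_divisors] at hd ⊢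
    obtain ⟨⟨hdM, -⟩, hnlt⟩ := hd
    refine ⟨⟨div_dvd_of_dvd hdM, hM0⟩, ?_⟩
    rw [mul_self_lt_iff_lt_div_mul_div hM0 (div_dvd_of_dvd hdM), Nat.div_div_self hdM hM0]
    exact hlt_of_not_lt hnlt
  all_goals
    intro d hd
    exact Nat.div_div_self (mem_divisors.mp (mem_filter.mp hd).1).1 hM0

theorem exists_prime_odd_factorization {m : ℕ} (hm : ¬IsSquare m) :
    ∃ p, p.Prime ∧ Odd (m.factorization p) := by
  by_contra! heven
  have hm0 : m ≠ 0 := by rintro rfl; exact hm ⟨0, rfl⟩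
  refine hm ⟨m.factorization.prod fun p e => p ^ (e / 2), ?_⟩
  rw [← Finsupp.prod_mul]
  conv_lhs => rw [← prod_factorization_pow_eq_self hm0]
  refine Finsupp.prod_congr fun p hp => ?_
  have := Nat.even_iff.mp (not_odd_iff_even.mp (heven p (prime_of_mem_primeFactors hp)))
  rw [← pow_add]
  congr 1
  omega

theorem odd_card_divisors_iff {m : ℕ} (hm : m ≠ 0) : Odd #m.divisors ↔ IsSquare m := by
  refine ⟨fun h => by_contra fun hsq => ?_, ?_⟩
  · rw [card_divisors_eq_two_mul_card_filter_mul_self_lt hsq] at h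
    exact Nat.not_odd_iff_even.mpr (even_two_mul _) h
  · rintro ⟨r, rfl⟩
    have hr : r ≠ 0 := left_ne_zero_of_mul hm
    rw [card_divisors hm]
    refine prod_induction _ Odd (fun _ _ => Odd.mul) odd_one fun p _ => ?_
    rw [factorization_mul hr hr, Finsupp.add_apply]
    exact ⟨r.factorization p, by ring⟩

theorem card_divisors_prime_pow {p : ℕ} (hp : p.Prime) (k : ℕ) : #(p ^ k).divisors = k + 1 := by
  rw [divisors_prime_pow hp, card_map, card_range]

theorem card_divisors_eq_mul_card_divisors_ordCompl {M p : ℕ} (hM : M ≠ 0) (hp : p.Prime) :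
    #M.divisors = (M.factorization p + 1) * #(ordCompl[p] M).divisors := by
  conv_lhs => rw [← ordProj_mul_ordCompl_eq_self M p]
  rw [Coprime.card_divisors_mul ((coprime_ordCompl hp hM).pow_left _),
    card_divisors_prime_pow hp]

theorem card_divisors_mod_four_eq_two_iff {M : ℕ} (hM : M ≠ 0) :
    #M.divisors % 4 = 2 ↔
      ∃ p a m : ℕ, p.Prime ∧ 0 < m ∧ ¬p ∣ m ∧ M = p ^ (4 * a + 1) * m ^ 2 := by
  constructor
  · intro h
    have hsq : ¬IsSquare M := fun hsq => by
      have := Nat.odd_iff.mp ((odd_card_divisors_iff hM).2 hsq)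
      omega
    obtain ⟨p, hp, t, ht⟩ := exists_prime_odd_factorization hsq
    rw [card_divisors_eq_mul_card_divisors_ordCompl hM hp,
      show M.factorization p + 1 = 2 * (t + 1) by omega, mul_assoc] at h
    obtain ⟨⟨a, ha⟩, hc⟩ := Nat.odd_mul.mp (Nat.odd_iff.mpr (by omega :
      (t + 1) * #(ordCompl[p] M).divisors % 2 = 1))
    obtain ⟨m, hm⟩ := (odd_card_divisors_iff (ordCompl_pos p hM).ne').1 hc
    refine ⟨p, a, m, hp, ?_, ?_, ?_⟩
    · exact Nat.pos_of_ne_zero fun h0 => (ordCompl_pos p hM).ne' (by simp [hm, h0])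
    · exact fun hpm => not_dvd_ordCompl hp hM (hm ▸ dvd_mul_of_dvd_left hpm m)
    · calc M = p ^ M.factorization p * ordCompl[p] M := (ordProj_mul_ordCompl_eq_self M p).symm
        _ = p ^ (4 * a + 1) * m ^ 2 := by rw [hm, ← sq, ht, show 2 * t + 1 = 4 * a + 1 by omega]
  · rintro ⟨p, a, m, hp, hm, hpm, rfl⟩
    have hcop : Coprime (p ^ (4 * a + 1)) (m ^ 2) :=
      Coprime.pow _ _ ((Prime.coprime_iff_not_dvd hp).mpr hpm)
    obtain ⟨c, hc⟩ := (odd_card_divisors_iff (by positivity)).2 (IsSquare.sq m)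
    rw [hcop.card_divisors_mul, card_divisors_prime_pow hp, hc]
    ring_nf
    omega

end Nat

theorem dvd_sub_sq_iff_dvd_four_mul_sub_one {n k : ℕ} (h : (k + 1) ^ 2 ≤ n) :
    2 * k + 1 ∣ n - (k + 1) ^ 2 ↔ 2 * k + 1 ∣ 4 * n - 1 := by
  have hsplit : 4 * n - 1 = 4 * (n - (k + 1) ^ 2) + (2 * k + 1) * (2 * k + 3) := by
    have : (2 * k + 1) * (2 * k + 3) + 1 = 4 * (k + 1) ^ 2 := by ring
    omega
  have hcop : Nat.Coprime (2 * k + 1) 4 := by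
    simpa using (Nat.coprime_two_right.mpr (odd_two_mul_add_one k)).pow_right 2
  rw [hsplit, Nat.dvd_add_left (dvd_mul_right _ _), hcop.dvd_mul_left]

theorem card_filter_dvd_sub_sq_eq_card_filter_divisors {n : ℕ} (hn : 1 ≤ n) :
    #{k ∈ range n | (k + 1) ^ 2 ≤ n ∧ 2 * k + 1 ∣ n - (k + 1) ^ 2} =
      #{d ∈ (4 * n - 1).divisors | d * d < 4 * n - 1} := by
  have hodd : Odd (4 * n - 1) := ⟨2 * n - 1, by omega⟩
  have hsq (k : ℕ) : (2 * k + 1) * (2 * k + 1 + 2) + 1 = 4 * (k + 1) ^ 2 := by ring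
  apply card_nbij' (fun k => 2 * k + 1) (· / 2)
  · intro k hk
    simp only [mem_coe, mem_filter, mem_range, Nat.mem_divisors] at hk ⊢
    obtain ⟨-, hle, hdvd⟩ := hk
    have hM := (dvd_sub_sq_iff_dvd_four_mul_sub_one hle).1 hdvd
    refine ⟨⟨hM, by omega⟩, (Nat.mul_self_lt_iff_mul_add_two_le hodd hM).2 ?_⟩
    have := hsq k
    omega
  · intro d hd
    simp only [mem_coe, mem_filter, mem_range, Nat.mem_divisors] at hd ⊢
    obtain ⟨⟨hdM, -⟩, hlt⟩ := hd
    obtain ⟨k, rfl⟩ := hodd.of_dvd_nat hdM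
    have hle := (Nat.mul_self_lt_iff_mul_add_two_le hodd hdM).1 hlt
    rw [show (2 * k + 1) / 2 = k by omega]
    have hk : (k + 1) ^ 2 ≤ n := by have := hsq k; omega
    exact ⟨by nlinarith, hk, (dvd_sub_sq_iff_dvd_four_mul_sub_one hk).2 hdM⟩
  · intro k _
    simp only
    omega
  · intro d hd
    have hdM := (Nat.mem_divisors.mp (mem_filter.mp hd).1).1
    obtain ⟨k, rfl⟩ := hodd.of_dvd_nat hdM
    simp only
    omega

/-- For `n ≥ 1`, `c(V₁⁽⁸⁾;n)` is odd iff `4n − 1 = p^(4a+1)·m²` for some prime `p`,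
`a ≥ 0` and positive `m` with `p ∤ m`. -/
theorem mockV18_parity (n : ℕ) (hn : 1 ≤ n) :
    Odd (PowerSeries.coeff n mockV18) ↔
      ∃ p a m : ℕ, p.Prime ∧ 0 < m ∧ ¬ p ∣ m ∧ 4 * n - 1 = p ^ (4 * a + 1) * m ^ 2 := by
  rw [odd_coeff_mockV18_iff, card_filter_dvd_sub_sq_eq_card_filter_divisors hn,
    ← Nat.card_divisors_mod_four_eq_two_iff (by omega),
    Nat.card_divisors_eq_two_mul_card_filter_mul_self_lt
      (Nat.not_isSquare_of_mod_four_eq_three (by omega)), Nat.odd_iff]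
  omega
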